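/- arXiv:1407.7162 — 5 statements merged into one kernel-verified Lean document; each statement's English description precedes it below -/
import Mathlib

section
/- Let $k,b\in\mathbb{N}$ with $k\geq 1$, and let $\phi_1,\ldots,\phi_k$ be permutations of the set $[k]^b$ of words of length $b$ over alphabet $[k]=\{1,\ldots,k\}$, and let $\rho:[k]^b\to[k]$ be any function. Then there exists a permutation $\phi$ of $[k]^{b+1}$ such that: (i) for every $x\in[k]$ and every $w\in[k]^b$ there exists $y\in[k]$ with $\phi(xw)=y\,\phi_x(w)$ (concatenation of the letter $y$ with the word $\phi_x(w)$); and (ii) for every $w\in[k]^b$, $\phi(1w)=\rho(w)\,\phi_1(w)$. -/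
/-! Send `xw` to `σ_v(x) v` with `v = φ_x(w)`, where each `σ_v` is a permutation of the
alphabet. This is a permutation whatever the `σ_v` are: `v` determines `σ_v`, hence `x`, hence
`w = φ_x⁻¹(v)`. Property (ii) asks for `σ_v(1) = ρ(φ_1⁻¹ v)`, which the transposition
`σ_v = (1 ρ(φ_1⁻¹ v))` achieves. -/

open Equiv

namespace Equiv.Perm

variable {α β : Type*}

def shearFiberwise (φ : α → Perm β) (σ : β → Perm α) : Perm (α × β) :=
  (prodShear (Equiv.refl α) φ).trans <|
    (prodComm α β).trans <| (prodShear (Equiv.refl β) σ).trans (prodComm β α)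

@[simp]
theorem shearFiberwise_apply (φ : α → Perm β) (σ : β → Perm α) (x : α) (w : β) :
    shearFiberwise φ σ (x, w) = (σ (φ x w) x, φ x w) :=
  rfl

theorem exists_perm_cons_eq {n : ℕ} (φ : α → Perm (Fin n → α)) (σ : (Fin n → α) → Perm α) :
    ∃ Φ : Perm (Fin (n + 1) → α),
      ∀ x w, Φ (Fin.cons x w) = Fin.cons (σ (φ x w) x) (φ x w) := by
  refine ⟨(Fin.consEquiv fun _ => α).permCongr (shearFiberwise φ σ), fun x w => ?_⟩
  simp [permCongr_apply, Fin.consEquiv]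

end Equiv.Perm

/-- Words of length `b` over `[k]` are `Fin b → Fin k`, the letter `1` is `⟨0, hk⟩`, and
`xw` is `Fin.cons x w`. -/
theorem stmt0 (k b : ℕ) (hk : 0 < k)
    (φ : Fin k → Equiv.Perm (Fin b → Fin k))
    (ρ : (Fin b → Fin k) → Fin k) :
    ∃ Φ : Equiv.Perm (Fin (b + 1) → Fin k),
      (∀ (x : Fin k) (w : Fin b → Fin k),
        ∃ y : Fin k, Φ (Fin.cons x w) = Fin.cons y (φ x w)) ∧
      (∀ w : Fin b → Fin k,
        Φ (Fin.cons (⟨0, hk⟩ : Fin k) w) = Fin.cons (ρ w) (φ ⟨0, hk⟩ w)) := by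
  classical
  let one : Fin k := ⟨0, hk⟩
  obtain ⟨Φ, hΦ⟩ :=
    Perm.exists_perm_cons_eq φ fun v => swap one (ρ ((φ one).symm v))
  refine ⟨Φ, fun x w => ⟨_, hΦ x w⟩, fun w => ?_⟩
  rw [hΦ, symm_apply_apply, swap_apply_left]
end

section
/- Let $k\geq 1$ and $b\in\mathbb{N}$, and let $\alpha:[k]^b\times[b]\to[k]\cup\{\bot\}$ be a function such that for every word $w\in[k]^b$ and every position $i\in[b]$, $\alpha(w,i)\neq\bot$ if and only if the $i$-th letter of $w$ equals $1$. Then there exists a permutation $\phi$ of $[k]^b$ such that for every $w\in[k]^b$ and every $i\in[b]$, if $w_i=1$ then the $i$-th letter of $\phi(w)$ equals $\alpha(w,i)$. -/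
/-!
The permutation is built one coordinate at a time. At coordinate `j`, the word `u` is sent to
`update u j (swap z a (u j))`, where the letter `a` is computed from `update u j z` and hence does
not depend on `u j`; this map is therefore an involution, changes only coordinate `j`, and sends a
letter `z` in coordinate `j` to `a`. Since earlier steps never touch coordinate `j`, the original
word can be recovered by inverting them, so `a` may be chosen as the letter prescribed for it.
-/

namespace Function

variable {ι K : Type*} [DecidableEq ι] [DecidableEq K]

def updateSwap (z : K) (a : (ι → K) → K) (j : ι) (u : ι → K) : ι → K :=
  update u j (Equiv.swap z (a (update u j z)) (u j))

theorem updateSwap_involutive (z : K) (a : (ι → K) → K) (j : ι) :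
    Involutive (updateSwap z a j) := by
  intro u
  simp only [updateSwap, update_idem, update_self, Equiv.swap_apply_self, update_eq_self]

theorem updateSwap_apply_of_ne {z : K} {a : (ι → K) → K} {i j : ι} (h : i ≠ j) (u : ι → K) :
    updateSwap z a j u i = u i :=
  update_of_ne h _ _

theorem updateSwap_apply_self_of_eq {z : K} {a : (ι → K) → K} {j : ι} {u : ι → K}
    (h : u j = z) : updateSwap z a j u j = a u := by
  rw [updateSwap, update_self, h, update_eq_self_iff.mpr h.symm, Equiv.swap_apply_left]

end Function

open Function

theorem exists_perm_apply_eq_on_finset {ι K : Type*} [DecidableEq ι] [DecidableEq K] (z : K)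
    (α : (ι → K) → ι → K) (s : Finset ι) :
    ∃ φ : Equiv.Perm (ι → K), ∀ w i,
      (i ∈ s → w i = z → φ w i = α w i) ∧ (i ∉ s → φ w i = w i) := by
  induction s using Finset.induction_on with
  | empty => exact ⟨1, fun w i => ⟨by simp, fun _ => rfl⟩⟩
  | insert j s hj ih =>
    obtain ⟨φ, hφ⟩ := ih
    let ψ := (updateSwap_involutive z (fun u => α (φ.symm (update u j z)) j) j).toPerm
    refine ⟨φ.trans ψ, fun w i => ⟨fun hi hwi => ?_, fun hi => ?_⟩⟩
    · rcases Finset.mem_insert.mp hi with rfl | hi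
      · have hφw : φ w i = z := ((hφ w i).2 hj).trans hwi
        have hupd : update (φ w) i z = φ w := update_eq_self_iff.mpr hφw.symm
        simp [ψ, updateSwap_apply_self_of_eq hφw, hupd]
      · have hij : i ≠ j := ne_of_mem_of_not_mem hi hj
        simpa [ψ, updateSwap_apply_of_ne hij] using (hφ w i).1 hi hwi
    · obtain ⟨hij, hi⟩ := by simpa only [Finset.mem_insert, not_or] using hi
      simpa [ψ, updateSwap_apply_of_ne hij] using (hφ w i).2 hi

/-- given `α : [k]^b × [b] → [k] ∪ {⊥}` (modeled with `Option (Fin k)`)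
with `α(w,i) ≠ ⊥ ↔ w_i = 1` (the letter `1` is `⟨0, hk⟩ : Fin k`), there is a
permutation `φ` of `[k]^b` with `φ(w)_i = α(w,i)` whenever `w_i = 1`. -/
theorem stmt1 (k b : ℕ) (hk : 0 < k)
    (α : (Fin b → Fin k) → Fin b → Option (Fin k))
    (hα : ∀ (w : Fin b → Fin k) (i : Fin b),
      (α w i).isSome ↔ w i = (⟨0, hk⟩ : Fin k)) :
    ∃ φ : Equiv.Perm (Fin b → Fin k),
      ∀ (w : Fin b → Fin k) (i : Fin b),
        w i = (⟨0, hk⟩ : Fin k) → α w i = some ((φ w) i) := by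
  obtain ⟨φ, hφ⟩ := exists_perm_apply_eq_on_finset ⟨0, hk⟩
    (fun w i => (α w i).getD ⟨0, hk⟩) Finset.univ
  refine ⟨φ, fun w i hwi => ?_⟩
  rw [(hφ w i).1 (Finset.mem_univ i) hwi, ← Option.get_eq_getD _ (h := (hα w i).mpr hwi),
    Option.some_get]
end

section
/- Let $n,k\geq 1$, $b\geq 1$, and $c=b\cdot k^{b-1}$ with $c\geq n$. Let $f:[c]\times[k]\to\mathbb{N}$. Let $V_1=[k]^b$ (viewed as a disjoint copy) and $V_2=[k]^b$, and let $\beta:V_1\times[b]\to[c]\cup\{\bot\}$ be a function such that $\beta(w,j)=\bot$ iff $w_j\neq 1$, and such that every element of $[c]$ is attained by $\beta$ exactly once. Define the weight of a bijection $\phi:V_1\to V_2$ as $W(\phi)=\sum_{t\in V_1}\sum_{i\in[b],\,\beta(t,i)\neq\bot} f(\beta(t,i),\phi(t)_i)$. Then for every bijection $\phi:V_1\to V_2$, $W(\phi)\in X_f$, where $X_f=\{\sum_{i=1}^{c} f(i,\sigma(i)) : \sigma:[c]\to[k]\}$. -/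
/-!
Every position `x ∈ [c]` is `β(t, i)` for exactly one pair `(t, i)`, so the weight of `φ` is a sum
over `[c]` reindexed through `β`; it is the value at `σ(x) := φ(t)_i` of the `f`-family.
-/

theorem Option.elim_zero_eq_sum_ite {γ M : Type*} [Fintype γ] [DecidableEq γ] [AddCommMonoid M]
    (o : Option γ) (g : γ → M) :
    o.elim 0 g = ∑ x, if o = some x then g x else 0 := by
  cases o <;> simp

theorem Fintype.sum_option_elim_eq_sum_of_existsUnique {α γ M : Type*} [Fintype α] [Fintype γ]
    [AddCommMonoid M] (e : α → Option γ) (he : ∀ x, ∃! a, e a = some x) (g : α → γ → M) :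
    ∑ a, (e a).elim 0 (g a) = ∑ x, g (he x).choose x := by
  classical
  simp_rw [Option.elim_zero_eq_sum_ite]
  rw [Finset.sum_comm]
  refine Fintype.sum_congr _ _ fun x => ?_
  have hx : e (he x).choose = some x := (he x).choose_spec.1
  rw [Fintype.sum_eq_single (he x).choose fun a ha => if_neg fun hax => ha ((he x).unique hax hx),
    if_pos hx]

theorem stmt4_general (k b c : ℕ)
    (f : Fin c → Fin k → ℕ)
    (β : (Fin b → Fin k) → Fin b → Option (Fin c))
    (hβbij : ∀ x : Fin c, ∃! p : (Fin b → Fin k) × Fin b, β p.1 p.2 = some x)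
    (φ : (Fin b → Fin k) ≃ (Fin b → Fin k)) :
    (∑ t : Fin b → Fin k, ∑ i : Fin b, (β t i).elim 0 (fun x => f x ((φ t) i)))
      ∈ {x : ℕ | ∃ σ : Fin c → Fin k, ∑ i, f i (σ i) = x} :=
  ⟨_, ((Fintype.sum_prod_type' _).symm.trans
    (Fintype.sum_option_elim_eq_sum_of_existsUnique (fun p : (Fin b → Fin k) × Fin b => β p.1 p.2)
      hβbij _)).symm⟩

/-- with `V₁ = V₂ = [k]^b`, `c = b·k^(b-1) ≥ n`, `f : [c]×[k] → ℕ`, and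
`β : V₁×[b] → [c] ∪ {⊥}` (modeled with `Option (Fin c)`) such that `β(w,j) = ⊥ ↔ w_j ≠ 1`
and every element of `[c]` is attained exactly once, the weight
`W(φ) = ∑_t ∑_{i, β(t,i) ≠ ⊥} f(β(t,i), φ(t)_i)` of every bijection `φ : V₁ → V₂`
belongs to `X_f = { ∑_{i=1}^c f(i,σ(i)) : σ : [c] → [k] }`. -/
theorem stmt4 (n k b c : ℕ) (hn : 1 ≤ n) (hk : 1 ≤ k) (hb : 1 ≤ b)
    (hc : c = b * k ^ (b - 1)) (hcn : n ≤ c)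
    (f : Fin c → Fin k → ℕ)
    (β : (Fin b → Fin k) → Fin b → Option (Fin c))
    (hβ : ∀ (w : Fin b → Fin k) (j : Fin b),
      β w j = none ↔ w j ≠ (⟨0, hk⟩ : Fin k))
    (hβbij : ∀ x : Fin c, ∃! p : (Fin b → Fin k) × Fin b, β p.1 p.2 = some x)
    (φ : (Fin b → Fin k) ≃ (Fin b → Fin k)) :
    (∑ t : Fin b → Fin k, ∑ i : Fin b, (β t i).elim 0 (fun x => f x ((φ t) i)))
      ∈ {x : ℕ | ∃ σ : Fin c → Fin k, ∑ i, f i (σ i) = x} :=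
  stmt4_general k b c f β hβbij φ
end

section
/- Let $n,k\geq 1$, $b\geq 1$, and $c=b\cdot k^{b-1}$ with $c\geq n$. Let $f:[c]\times[k]\to\mathbb{N}$ and let $\beta:[k]^b\times[b]\to[c]\cup\{\bot\}$ satisfy: $\beta(w,j)=\bot$ iff $w_j\neq 1$, and every element of $[c]$ is attained by $\beta$ exactly once. Then for every $x\in X_f$ (where $X_f=\{\sum_{i=1}^{c} f(i,\sigma(i)) : \sigma:[c]\to[k]\}$) there exists a bijection $\phi:[k]^b\to[k]^b$ such that $\sum_{t\in[k]^b}\sum_{i\in[b],\,\beta(t,i)\neq\bot} f(\beta(t,i),\phi(t)_i)=x$. -/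
/-!
Choose `σ` with `∑ i, f i (σ i) = x`. The weight of `φ` reads `φ t` only at the positions `i`
with `t i = 1`, where `β (t, i)` is defined, and there we want `φ t i = σ (β (t, i))`. So it
suffices to find a permutation of `[k]^b` whose values are prescribed at the coordinates where
the input word has the letter `1` (`⟨0, hk⟩ : Fin k`). Such a permutation is built by induction on `b`: permute the
tails fibrewise over the first letter, then fix the first letter by a transposition. Since every
`y ∈ [c]` is `β (t, i)` for exactly one pair, the weight then reindexes to `∑ y, f y (σ y)`.
-/

theorem exists_perm_prod_snd_eq_and_fst_eq {α β : Type*} [DecidableEq α] (z : α)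
    (ρ : α → Equiv.Perm β) (g : β → α) :
    ∃ Φ : Equiv.Perm (α × β), ∀ x u, (Φ (x, u)).2 = ρ x u ∧ (x = z → (Φ (x, u)).1 = g u) := by
  -- shear by `ρ`, then correct the first coordinate by a transposition depending on the new second
  refine ⟨(Equiv.prodShear (Equiv.refl α) ρ).trans ((Equiv.prodComm _ _).trans
    ((Equiv.prodShear (Equiv.refl β) fun y => Equiv.swap z (g ((ρ z).symm y))).trans
      (Equiv.prodComm _ _))), fun x u => ⟨rfl, ?_⟩⟩
  rintro rfl
  simp [Equiv.prodShear]

theorem exists_perm_pi_apply_eq_of_apply_eq {α : Type*} [DecidableEq α] (z : α) :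
    ∀ (b : ℕ) (τ : (Fin b → α) → Fin b → α),
      ∃ φ : Equiv.Perm (Fin b → α), ∀ w j, w j = z → φ w j = τ w j := by
  intro b
  induction b with
  | zero => exact fun _ => ⟨1, fun _ j => j.elim0⟩
  | succ b ih =>
    intro τ
    choose ρ hρ using fun x : α => ih fun u j => τ (Fin.cons x u) j.succ
    obtain ⟨Φ, hΦ⟩ := exists_perm_prod_snd_eq_and_fst_eq z ρ fun u => τ (Fin.cons z u) 0
    let e := Fin.consEquiv fun _ : Fin (b + 1) => α
    refine ⟨e.symm.trans (Φ.trans e), Fin.forall_fin_succ_pi.2 fun x u j hj => ?_⟩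
    have hφ : e.symm.trans (Φ.trans e) (Fin.cons x u) = Fin.cons (Φ (x, u)).1 (Φ (x, u)).2 := by
      simp [e, Fin.consEquiv]
    rw [hφ]
    cases j using Fin.cases with
    | zero => simp only [Fin.cons_zero] at hj ⊢; subst hj; exact (hΦ _ u).2 rfl
    | succ j => simp only [Fin.cons_succ] at hj ⊢; rw [(hΦ x u).1, hρ x u j hj]

theorem Fintype.sum_option_elim_eq_sum {ι κ M : Type*} [Fintype ι] [Fintype κ] [AddCommMonoid M]
    (β : ι → Option κ) (hβ : ∀ y, ∃! i, β i = some y) (F : κ → M) :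
    ∑ i, (β i).elim 0 F = ∑ y, F y := by
  classical
  have hfiber : ∀ y, ∑ i, (if β i = some y then F y else 0) = F y := fun y => by
    obtain ⟨i, hi, huniq⟩ := hβ y
    rw [Fintype.sum_eq_single i fun j hj => if_neg fun h => hj (huniq j h), if_pos hi]
  have hrow : ∀ i, ∑ y, (if β i = some y then F y else 0) = (β i).elim 0 F := fun i => by
    cases β i <;> simp
  calc ∑ i, (β i).elim 0 F
      = ∑ i, ∑ y, (if β i = some y then F y else 0) := by simp only [hrow]
    _ = ∑ y, ∑ i, (if β i = some y then F y else 0) := Finset.sum_comm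
    _ = ∑ y, F y := by simp only [hfiber]

theorem stmt5_general (k b c : ℕ) (hk : 1 ≤ k)
    (f : Fin c → Fin k → ℕ)
    (β : (Fin b → Fin k) → Fin b → Option (Fin c))
    (hβ : ∀ (w : Fin b → Fin k) (j : Fin b),
      β w j = none ↔ w j ≠ (⟨0, hk⟩ : Fin k))
    (hβbij : ∀ x : Fin c, ∃! p : (Fin b → Fin k) × Fin b, β p.1 p.2 = some x)
    (x : ℕ) (hx : x ∈ {x : ℕ | ∃ σ : Fin c → Fin k, ∑ i, f i (σ i) = x}) :
    ∃ φ : (Fin b → Fin k) ≃ (Fin b → Fin k),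
      (∑ t : Fin b → Fin k, ∑ i : Fin b, (β t i).elim 0 (fun y => f y ((φ t) i))) = x := by
  obtain ⟨σ, rfl⟩ := hx
  obtain ⟨φ, hφ⟩ := exists_perm_pi_apply_eq_of_apply_eq ⟨0, hk⟩ b
    fun w j => (β w j).elim ⟨0, hk⟩ σ
  refine ⟨φ, ?_⟩
  have hterm : ∀ t i,
      (β t i).elim 0 (fun y => f y (φ t i)) = (β t i).elim 0 (fun y => f y (σ y)) := by
    intro t i
    cases hti : β t i with
    | none => rfl
    | some y =>
      have ht : t i = ⟨0, hk⟩ := not_not.1 fun hne => by simp [(hβ t i).2 hne] at hti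
      simp [hφ t i ht, hti]
  simp only [hterm]
  rw [← Fintype.sum_prod_type']
  exact Fintype.sum_option_elim_eq_sum (fun p : (Fin b → Fin k) × Fin b => β p.1 p.2) hβbij
    fun y => f y (σ y)

/-- converse direction of Statement 4 — every `x ∈ X_f` is the weight of
some bijection `φ : [k]^b → [k]^b`. -/
theorem stmt5 (n k b c : ℕ) (hn : 1 ≤ n) (hk : 1 ≤ k) (hb : 1 ≤ b)
    (hc : c = b * k ^ (b - 1)) (hcn : n ≤ c)
    (f : Fin c → Fin k → ℕ)
    (β : (Fin b → Fin k) → Fin b → Option (Fin c))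
    (hβ : ∀ (w : Fin b → Fin k) (j : Fin b),
      β w j = none ↔ w j ≠ (⟨0, hk⟩ : Fin k))
    (hβbij : ∀ x : Fin c, ∃! p : (Fin b → Fin k) × Fin b, β p.1 p.2 = some x)
    (x : ℕ) (hx : x ∈ {x : ℕ | ∃ σ : Fin c → Fin k, ∑ i, f i (σ i) = x}) :
    ∃ φ : (Fin b → Fin k) ≃ (Fin b → Fin k),
      (∑ t : Fin b → Fin k, ∑ i : Fin b, (β t i).elim 0 (fun y => f y ((φ t) i))) = x :=
  stmt5_general k b c hk f β hβ hβbij x hx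
end

section
/- Let $(V,d,s)$ be a Channel Assignment instance, $n\geq 1$, $M\geq 1$, $s=(8n-1)M$, and suppose $V$ contains vertices $v_1,\ldots,v_{4n}$ with $d(v_i,v_j)\geq |i-j|\cdot 2M$ for all $i\neq j$ with $\{i,j\}\neq\{1,4n\}$, and $d(v_1,v_{4n})=s-1$. Then for every proper coloring $c:V\to\mathbb{Z}$ with span at most $s$ and with $c(v_1)\leq c(v_{4n})$, the sequence $c(v_1),c(v_2),\ldots,c(v_{4n})$ is strictly increasing. -/
/-!
The colors of `v₁` and `v_{4n}` differ by at least `d(v₁, v_{4n}) = s - 1`, and by the span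
bound by at most `s - 1`, so every color lies between them. Properness against the two ends
then confines `c(v_i) - c(v₁)` to the window `[2M(i-1), 2M(i-1) + M - 1]`, and these windows
are pairwise disjoint and increasing in `i`.
-/

open Finset

/-- A coloring is proper for a Channel Assignment instance `(V, d, s)`. -/
def CAProper {α : Type*} (V : Finset α) (d : α → α → ℕ) (c : α → ℤ) : Prop :=
  ∀ x ∈ V, ∀ y ∈ V, x ≠ y → (d x y : ℤ) ≤ |c x - c y|

/-- A YES-coloring: proper, with span at most `s`. -/
def CAYes {α : Type*} (V : Finset α) (d : α → α → ℕ) (s : ℕ) (c : α → ℤ) : Prop :=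
  CAProper V d c ∧ ∀ x ∈ V, ∀ y ∈ V, c x - c y + 1 ≤ (s : ℤ)

section ChannelAssignment

variable {α : Type*} {V : Finset α} {d : α → α → ℕ} {s : ℕ} {c : α → ℤ} {x y : α}

lemma CAProper.dist_le_sub (hc : CAProper V d c) (hx : x ∈ V) (hy : y ∈ V) (hxy : x ≠ y)
    (hle : c x ≤ c y) : (d x y : ℤ) ≤ c y - c x := by
  have h := hc x hx y hy hxy
  rwa [abs_sub_comm, abs_of_nonneg (sub_nonneg.2 hle)] at h

lemma CAProper.sub_mul_le_sub {m : ℕ} (hc : CAProper V d c) {v : Fin m → α}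
    (hinj : Function.Injective v) (hmem : ∀ i, v i ∈ V) {L : ℤ}
    (hD : ∀ i j : Fin m, i < j → ((j : ℤ) - i) * L ≤ d (v i) (v j))
    {i j : Fin m} (hij : i ≤ j) (hle : c (v i) ≤ c (v j)) :
    ((j : ℤ) - i) * L ≤ c (v j) - c (v i) := by
  rcases hij.lt_or_eq with hij | rfl
  · exact (hD i j hij).trans <|
      hc.dist_le_sub (hmem i) (hmem j) (hinj.ne hij.ne) hle
  · simp

lemma CAYes.one_le_span (hc : CAYes V d s c) (hx : x ∈ V) : 1 ≤ s := by
  have := hc.2 x hx x hx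
  omega

lemma CAYes.sub_eq_of_dist_eq (hc : CAYes V d s c) (hx : x ∈ V) (hy : y ∈ V) (hxy : x ≠ y)
    (hd : d x y = s - 1) (hle : c x ≤ c y) : c y - c x = s - 1 := by
  have hlow := hc.1.dist_le_sub hx hy hxy hle
  have hs := hc.one_le_span hx
  have hup := hc.2 y hy x hx
  rw [hd, Nat.cast_sub hs, Nat.cast_one] at hlow
  linarith

lemma CAYes.mem_Icc_of_sub_eq (hc : CAYes V d s c) (hx : x ∈ V) (hy : y ∈ V)
    (hgap : c y - c x = s - 1) {z : α} (hz : z ∈ V) : c z ∈ Set.Icc (c x) (c y) := by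
  have h₁ := hc.2 y hy z hz
  have h₂ := hc.2 z hz x hx
  constructor <;> linarith

end ChannelAssignment

lemma strictMono_of_spread {m : ℕ} {g : Fin m → ℤ} {L lo hi : ℤ} (hL : 0 ≤ L)
    (hwidth : hi - lo < m * L) (hlo : ∀ i : Fin m, ((i : ℕ) : ℤ) * L ≤ g i - lo)
    (hhi : ∀ i, ((m : ℤ) - 1 - i) * L ≤ hi - g i) : StrictMono g := by
  intro i j hij
  have hij' : (i : ℤ) + 1 ≤ j := by exact_mod_cast hij
  have := hlo j
  have := hhi i
  nlinarith [mul_le_mul_of_nonneg_right hij' hL]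

lemma sub_mul_le_dist_of_endpoints {α : Type*} {d : α → α → ℕ} {m : ℕ} (hm : 0 < m) {L : ℤ}
    {v : Fin m → α}
    (hd : ∀ i j : Fin m, i ≠ j →
      ¬(((i : ℕ) = 0 ∧ (j : ℕ) = m - 1) ∨ ((i : ℕ) = m - 1 ∧ (j : ℕ) = 0)) →
      |(i : ℤ) - (j : ℤ)| * L ≤ (d (v i) (v j) : ℤ))
    (hend : ((m : ℤ) - 1) * L ≤ d (v ⟨0, hm⟩) (v ⟨m - 1, by omega⟩)) :
    ∀ i j : Fin m, i < j → ((j : ℤ) - i) * L ≤ d (v i) (v j) := by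
  intro i j hij
  have hij' : (i : ℕ) < j := hij
  by_cases hij_end : (i : ℕ) = 0 ∧ (j : ℕ) = m - 1
  · obtain ⟨hi, hj⟩ := hij_end
    rw [show (⟨0, _⟩ : Fin m) = i from Fin.ext hi.symm,
      show (⟨m - 1, _⟩ : Fin m) = j from Fin.ext hj.symm] at hend
    rwa [hi, hj, Nat.cast_sub hm, Nat.cast_one, Nat.cast_zero, sub_zero]
  · have h := hd i j hij.ne (by omega)
    rwa [abs_sub_comm, abs_of_pos (sub_pos.2 (by exact_mod_cast hij'))] at h

/-- if `V` contains distinct vertices `v₁, …, v_{4n}` with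
`d(v_i, v_j) ≥ |i - j| · 2M` for `i ≠ j`, `{i,j} ≠ {1,4n}`, and
`d(v₁, v_{4n}) = s - 1` where `s = (8n-1)M`, then every YES-coloring `c` with
`c(v₁) ≤ c(v_{4n})` colors `v₁, …, v_{4n}` in strictly increasing order. -/
theorem stmt11 {α : Type*}
    (V : Finset α) (d : α → α → ℕ) (n M s : ℕ)
    (hn : 1 ≤ n) (hs : s = (8 * n - 1) * M)
    (v : Fin (4 * n) → α) (hinj : Function.Injective v)
    (hmem : ∀ i, v i ∈ V)
    (hd : ∀ i j : Fin (4 * n), i ≠ j →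
      ¬(((i : ℕ) = 0 ∧ (j : ℕ) = 4 * n - 1) ∨ ((i : ℕ) = 4 * n - 1 ∧ (j : ℕ) = 0)) →
      |(i : ℤ) - (j : ℤ)| * (2 * M) ≤ (d (v i) (v j) : ℤ))
    (hd1 : d (v ⟨0, by omega⟩) (v ⟨4 * n - 1, by omega⟩) = s - 1)
    (c : α → ℤ) (hc : CAYes V d s c)
    (hord : c (v ⟨0, by omega⟩) ≤ c (v ⟨4 * n - 1, by omega⟩)) :
    ∀ i j : Fin (4 * n), i < j → c (v i) < c (v j) := by
  set z : Fin (4 * n) := ⟨0, by omega⟩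
  set w : Fin (4 * n) := ⟨4 * n - 1, by omega⟩
  have hs1 : 1 ≤ s := hc.one_le_span (hmem z)
  have hsZ : (s : ℤ) = (8 * n - 1) * M := by
    rw [hs, Nat.cast_mul, Nat.cast_sub (by omega)]
    push_cast
    ring
  have hM : 1 ≤ M := Nat.pos_of_ne_zero fun hM => by simp [hs, hM] at hs1
  have hfwd := sub_mul_le_dist_of_endpoints (by omega) hd <| by
    rw [hd1, Nat.cast_sub hs1, hsZ]
    push_cast
    nlinarith
  have hgap : c (v w) - c (v z) = s - 1 :=
    hc.sub_eq_of_dist_eq (hmem z) (hmem w) (hinj.ne (by simp [z, w, Fin.ext_iff]; omega)) hd1 hord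
  have hIcc i := hc.mem_Icc_of_sub_eq (hmem z) (hmem w) hgap (hmem i)
  refine fun i j hij => strictMono_of_spread (g := c ∘ v) (L := 2 * M)
    (lo := c (v z)) (hi := c (v w)) (by positivity) ?_ ?_ ?_ hij
  · rw [hgap, hsZ]
    push_cast
    linarith
  · intro i
    have hzi : z ≤ i := Nat.zero_le _
    simpa [z] using hc.1.sub_mul_le_sub hinj hmem hfwd hzi (hIcc i).1
  · intro i
    have hiw : i ≤ w := Nat.le_pred_of_lt i.isLt
    simpa [w, Nat.cast_sub (by omega : 1 ≤ 4 * n)] using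
      hc.1.sub_mul_le_sub hinj hmem hfwd hiw (hIcc i).2
end
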